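/- Middle-frequency L∞ bound via LMI (sufficiency direction of Theorem 4): Let 0 < ν < 2, φ = (π/2)(ν−1), δ > 0, 0 ≤ ω₁ ≤ ω₂, and let A ∈ ℝ^{n×n}, B ∈ ℝ^{n×m}, C ∈ ℝ^{p×n}, D ∈ ℝ^{p×m}. Set ω_c = e^{iπν/2}(ω₁^ν + ω₂^ν)/2. Suppose there exist Hermitian matrices U, V ∈ ℂ^{n×n} with V positive definite such that, with X = Aᵀ(e^{iφ}U + ω_c V) and Y = −BᵀVA + Bᵀ(e^{iφ}U + ω_c V), the Hermitian block matrix [[Sym(X) − AᵀVA − ω₁^ν ω₂^ν V, Y*, Cᵀ],[Y, −δI_m − BᵀVB, Dᵀ],[C, D, −δI_p]] is negative definite. Then for every ω ∈ [ω₁, ω₂], the matrix ω^ν e^{iπν/2} I_n − A is invertible and σmax(C(ω^ν e^{iπν/2} I_n − A)^{−1}B + D) < δ. -/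

import Mathlib

open Matrix Complex
open scoped Matrix Kronecker ComplexOrder

/-! Fix `ω`, put `r = ω^ν` and `λ = r e^{iπν/2}`. For `x, u` with `A x + B u = λ x` the quadratic
form of the LMI matrix at `(x, u, w)` collapses: since `e^{iφ} = -i e^{iπν/2}`, the number
`conj λ · e^{iφ}` is purely imaginary and the `U`-terms cancel, while the `V`-terms leave
`(r - ω₁^ν)(ω₂^ν - r) x*Vx ≥ 0`. Negative definiteness therefore forces
`-δ|u|² + 2 Re w*(Cx + Du) - δ|w|² < 0` whenever `(x, u) ≠ 0`. Taking `u = w = 0` rules out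
eigenvectors of `A` for `λ`; taking `w = G(iω)u / δ` gives `|G(iω)u| < δ|u|`, and compactness of
the unit sphere turns this pointwise strict bound into `σmax(G(iω)) < δ`. -/

/-- The largest singular value (ℓ² operator norm) of a complex matrix. -/
noncomputable def sigmaMax {m n : ℕ} (M : Matrix (Fin m) (Fin n) ℂ) : ℝ :=
  ‖LinearMap.toContinuousLinearMap (Matrix.toEuclideanLin M)‖

/-- A real matrix regarded as a complex matrix. -/
noncomputable def cmap {a b : ℕ} (M : Matrix (Fin a) (Fin b) ℝ) : Matrix (Fin a) (Fin b) ℂ :=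
  M.map Complex.ofReal

/-- ρ(θ, M) = [θ,1]* M [θ,1], real-valued for Hermitian M. -/
noncomputable def rho (θ : ℂ) (M : Matrix (Fin 2) (Fin 2) ℂ) : ℝ :=
  (star ![θ, 1] ⬝ᵥ M *ᵥ ![θ, 1]).re

/-- Δ₀ = [[0, e^{iφ}],[e^{−iφ}, 0]]. -/
noncomputable def Delta0 (φ : ℝ) : Matrix (Fin 2) (Fin 2) ℂ :=
  !![0, Complex.exp ((φ : ℂ) * Complex.I);
     Complex.exp (-(φ : ℂ) * Complex.I), 0]

/-- Σ₀ = [[α, β e^{iφ}],[β e^{−iφ}, γ]]. -/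
noncomputable def Sigma0 (φ α β γ : ℝ) : Matrix (Fin 2) (Fin 2) ℂ :=
  !![(α : ℂ), (β : ℂ) * Complex.exp ((φ : ℂ) * Complex.I);
     (β : ℂ) * Complex.exp (-(φ : ℂ) * Complex.I), (γ : ℂ)]

/-- A 3×3 block matrix. -/
noncomputable def block3 {n m p : ℕ}
    (A11 : Matrix (Fin n) (Fin n) ℂ) (A12 : Matrix (Fin n) (Fin m) ℂ)
    (A13 : Matrix (Fin n) (Fin p) ℂ)
    (A21 : Matrix (Fin m) (Fin n) ℂ) (A22 : Matrix (Fin m) (Fin m) ℂ)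
    (A23 : Matrix (Fin m) (Fin p) ℂ)
    (A31 : Matrix (Fin p) (Fin n) ℂ) (A32 : Matrix (Fin p) (Fin m) ℂ)
    (A33 : Matrix (Fin p) (Fin p) ℂ) :
    Matrix ((Fin n ⊕ Fin m) ⊕ Fin p) ((Fin n ⊕ Fin m) ⊕ Fin p) ℂ :=
  Matrix.fromBlocks (Matrix.fromBlocks A11 A12 A21 A22)
    (Matrix.fromRows A13 A23) (Matrix.fromCols A31 A32) A33

theorem ContinuousLinearMap.opNorm_lt_of_forall_norm_eq_one {𝕜 E F : Type*} [RCLike 𝕜]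
    [NormedAddCommGroup E] [NormedSpace 𝕜 E] [ProperSpace E]
    [SeminormedAddCommGroup F] [NormedSpace 𝕜 F]
    (f : E →L[𝕜] F) {c : ℝ} (hc : 0 < c) (hf : ∀ x, ‖x‖ = 1 → ‖f x‖ < c) : ‖f‖ < c := by
  rcases subsingleton_or_nontrivial E with _ | _
  · rwa [opNorm_subsingleton]
  obtain ⟨x₀, hx₀, hmax⟩ := (isCompact_sphere (0 : E) 1).exists_isMaxOn
    (Set.nonempty_coe_sort.1 (NormedSpace.sphere_nonempty_rclike 𝕜 zero_le_one))
    f.continuous.norm.continuousOn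
  refine (opNorm_le_of_unit_norm (norm_nonneg _) fun x hx => hmax ?_).trans_lt
    (hf x₀ (by simpa using hx₀))
  simpa using hx

theorem EuclideanSpace.norm_sq_eq_re_star_dotProduct {𝕜 ι : Type*} [RCLike 𝕜] [Fintype ι]
    (x : EuclideanSpace 𝕜 ι) : ‖x‖ ^ 2 = RCLike.re (star x.ofLp ⬝ᵥ x.ofLp) := by
  rw [← inner_self_eq_norm_sq (𝕜 := 𝕜), EuclideanSpace.inner_eq_star_dotProduct, dotProduct_comm]

theorem sigmaMax_lt_of_forall_ne_zero {m p : ℕ} (G : Matrix (Fin p) (Fin m) ℂ) {c : ℝ}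
    (hc : 0 < c) (h : ∀ u ≠ 0, (star (G *ᵥ u) ⬝ᵥ G *ᵥ u).re < c ^ 2 * (star u ⬝ᵥ u).re) :
    sigmaMax G < c := by
  refine ContinuousLinearMap.opNorm_lt_of_forall_norm_eq_one _ hc fun u hu => ?_
  have hu0 : u.ofLp ≠ 0 := (WithLp.ofLp_eq_zero 2).not.2 (by rintro rfl; simp at hu)
  refine lt_of_pow_lt_pow_left₀ 2 hc.le ?_
  have hu1 : (star u.ofLp ⬝ᵥ u.ofLp).re = 1 := by
    simpa [hu] using (EuclideanSpace.norm_sq_eq_re_star_dotProduct u).symm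
  simpa [EuclideanSpace.norm_sq_eq_re_star_dotProduct, hu1] using h _ hu0

theorem Matrix.star_dotProduct_conjTranspose_mulVec {α ι κ : Type*} [CommSemiring α] [StarRing α]
    [Fintype ι] [Fintype κ] (N : Matrix κ ι α) (x : ι → α) (v : κ → α) :
    star x ⬝ᵥ Nᴴ *ᵥ v = star (N *ᵥ x) ⬝ᵥ v := by
  rw [star_mulVec, dotProduct_mulVec]

theorem cmap_transpose {a b : ℕ} (M : Matrix (Fin a) (Fin b) ℝ) : (cmap M)ᵀ = (cmap M)ᴴ := by
  ext i j
  simp [cmap]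

section Block3

variable {n m p : ℕ}

theorem star_sumElim_dotProduct_block3_mulVec
    (A11 : Matrix (Fin n) (Fin n) ℂ) (A12 : Matrix (Fin n) (Fin m) ℂ)
    (A13 : Matrix (Fin n) (Fin p) ℂ)
    (A21 : Matrix (Fin m) (Fin n) ℂ) (A22 : Matrix (Fin m) (Fin m) ℂ)
    (A23 : Matrix (Fin m) (Fin p) ℂ)
    (A31 : Matrix (Fin p) (Fin n) ℂ) (A32 : Matrix (Fin p) (Fin m) ℂ)
    (A33 : Matrix (Fin p) (Fin p) ℂ)
    (x : Fin n → ℂ) (u : Fin m → ℂ) (w : Fin p → ℂ) :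
    star (Sum.elim (Sum.elim x u) w) ⬝ᵥ
      block3 A11 A12 A13 A21 A22 A23 A31 A32 A33 *ᵥ Sum.elim (Sum.elim x u) w =
    star x ⬝ᵥ A11 *ᵥ x + star x ⬝ᵥ A12 *ᵥ u + star x ⬝ᵥ A13 *ᵥ w +
    (star u ⬝ᵥ A21 *ᵥ x + star u ⬝ᵥ A22 *ᵥ u + star u ⬝ᵥ A23 *ᵥ w) +
    (star w ⬝ᵥ A31 *ᵥ x + star w ⬝ᵥ A32 *ᵥ u + star w ⬝ᵥ A33 *ᵥ w) := by
  simp only [block3, Function.star_sumElim, fromBlocks_mulVec, Sum.elim_comp_inl, Sum.elim_comp_inr,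
    fromRows_mulVec, fromCols_mulVec_sumElim, sumElim_dotProduct_sumElim, dotProduct_add]
  ring

theorem star_sumElim_dotProduct_kyp_block3_mulVec
    (A : Matrix (Fin n) (Fin n) ℂ) (B : Matrix (Fin n) (Fin m) ℂ)
    (C : Matrix (Fin p) (Fin n) ℂ) (D : Matrix (Fin p) (Fin m) ℂ)
    (W V : Matrix (Fin n) (Fin n) ℂ) (hV : Vᴴ = V) (s δ : ℂ) {μ : ℂ}
    {x : Fin n → ℂ} {u : Fin m → ℂ} (w : Fin p → ℂ) (h : A *ᵥ x + B *ᵥ u = μ • x) :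
    star (Sum.elim (Sum.elim x u) w) ⬝ᵥ
      block3 (Aᴴ * W + (Aᴴ * W)ᴴ - Aᴴ * V * A - s • V) (-(Bᴴ * V * A) + Bᴴ * W)ᴴ Cᴴ
        (-(Bᴴ * V * A) + Bᴴ * W) (-δ • 1 - Bᴴ * V * B) Dᴴ C D (-δ • 1) *ᵥ
      Sum.elim (Sum.elim x u) w =
    star μ * (star x ⬝ᵥ W *ᵥ x) + μ * (star x ⬝ᵥ Wᴴ *ᵥ x) - (star μ * μ + s) * (star x ⬝ᵥ V *ᵥ x) +
    (-δ * (star u ⬝ᵥ u) + star w ⬝ᵥ (C *ᵥ x + D *ᵥ u) + star (C *ᵥ x + D *ᵥ u) ⬝ᵥ w -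
      δ * (star w ⬝ᵥ w)) := by
  have hBu : B *ᵥ u = μ • x - A *ᵥ x := eq_sub_of_add_eq' h
  rw [star_sumElim_dotProduct_block3_mulVec]
  simp only [conjTranspose_add, conjTranspose_neg, conjTranspose_mul, conjTranspose_conjTranspose,
    hV, Matrix.mul_assoc, ← mulVec_mulVec, add_mulVec, sub_mulVec, neg_mulVec, smul_mulVec,
    one_mulVec, star_dotProduct_conjTranspose_mulVec, hBu, mulVec_sub, mulVec_smul,
    star_add, star_sub, star_smul, dotProduct_add, dotProduct_sub, dotProduct_neg, dotProduct_smul,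
    add_dotProduct, sub_dotProduct, smul_dotProduct, smul_eq_mul]
  ring

end Block3

theorem middleFrequency_weight_eq {ι : Type*} [Fintype ι] {U V : Matrix ι ι ℂ}
    (hU : U.IsHermitian) (hV : V.IsHermitian) {e f ωc : ℂ} {r r₁ r₂ : ℝ}
    (he : star e * e = 1) (hf : f = -I * e) (hωc : ωc = e * ((r₁ : ℂ) + r₂) / 2) (x : ι → ℂ) :
    star ((r : ℂ) * e) * (star x ⬝ᵥ (f • U + ωc • V) *ᵥ x) +
        (r : ℂ) * e * (star x ⬝ᵥ (f • U + ωc • V)ᴴ *ᵥ x) -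
        (star ((r : ℂ) * e) * ((r : ℂ) * e) + ((r₁ * r₂ : ℝ) : ℂ)) * (star x ⬝ᵥ V *ᵥ x) =
      (((r - r₁) * (r₂ - r) : ℝ) : ℂ) * (star x ⬝ᵥ V *ᵥ x) := by
  subst hf hωc
  rw [Complex.star_def] at he
  simp only [conjTranspose_add, conjTranspose_smul, hU.eq, hV.eq, add_mulVec, smul_mulVec,
    dotProduct_add, dotProduct_smul, smul_eq_mul, star_mul', star_neg, star_div₀, star_add,
    Complex.star_def, conj_ofReal, conj_I, map_ofNat]
  push_cast
  linear_combination ((r : ℂ) * (r₁ + r₂) - r ^ 2) * (star x ⬝ᵥ V *ᵥ x) * he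

section Dissipativity

variable {ι κ μ : Type*} [Fintype ι] [Fintype κ] [Fintype μ]

def IsStrictlyDissipativeAt (A : Matrix ι ι ℂ) (B : Matrix ι κ ℂ) (C : Matrix μ ι ℂ)
    (D : Matrix μ κ ℂ) (s : ℂ) (δ : ℝ) : Prop :=
  ∀ x u w, A *ᵥ x + B *ᵥ u = s • x → x ≠ 0 ∨ u ≠ 0 →
    (-δ * (star u ⬝ᵥ u) + star w ⬝ᵥ (C *ᵥ x + D *ᵥ u) + star (C *ᵥ x + D *ᵥ u) ⬝ᵥ w -
      δ * (star w ⬝ᵥ w)).re < 0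

variable {A : Matrix ι ι ℂ} {B : Matrix ι κ ℂ} {C : Matrix μ ι ℂ} {D : Matrix μ κ ℂ} {s : ℂ}
  {δ : ℝ}

theorem IsStrictlyDissipativeAt.isUnit_smul_one_sub [DecidableEq ι]
    (h : IsStrictlyDissipativeAt A B C D s δ) : IsUnit (s • (1 : Matrix ι ι ℂ) - A) := by
  rw [isUnit_iff_isUnit_det, isUnit_iff_ne_zero]
  intro hdet
  obtain ⟨x, hx, hsx⟩ := exists_mulVec_eq_zero_iff.2 hdet
  have heig : A *ᵥ x + B *ᵥ 0 = s • x := by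
    rw [sub_mulVec, smul_mulVec, one_mulVec, sub_eq_zero] at hsx
    rw [mulVec_zero, add_zero, hsx]
  simpa using h x 0 0 heig (Or.inl hx)

theorem IsStrictlyDissipativeAt.re_star_dotProduct_lt [DecidableEq ι]
    (h : IsStrictlyDissipativeAt A B C D s δ) (hδ : 0 < δ) {u : κ → ℂ} (hu : u ≠ 0) :
    let G := C * (s • (1 : Matrix ι ι ℂ) - A)⁻¹ * B + D
    (star (G *ᵥ u) ⬝ᵥ G *ᵥ u).re < δ ^ 2 * (star u ⬝ᵥ u).re := by
  intro G
  set x := (s • (1 : Matrix ι ι ℂ) - A)⁻¹ *ᵥ (B *ᵥ u)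
  have hx : A *ᵥ x + B *ᵥ u = s • x := by
    have hsx : (s • (1 : Matrix ι ι ℂ) - A) *ᵥ x = B *ᵥ u := by
      rw [mulVec_mulVec, mul_nonsing_inv _ (isUnit_iff_isUnit_det _ |>.1 h.isUnit_smul_one_sub),
        one_mulVec]
    rw [← hsx, sub_mulVec, smul_mulVec, one_mulVec]
    abel
  have hG : G *ᵥ u = C *ᵥ x + D *ᵥ u := by
    simp only [G, x, add_mulVec, mulVec_mulVec, Matrix.mul_assoc]
  have hw := h x u (((δ⁻¹ : ℝ) : ℂ) • (C *ᵥ x + D *ᵥ u)) hx (Or.inr hu)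
  rw [← hG] at hw
  simp only [star_smul, smul_dotProduct, dotProduct_smul, smul_eq_mul, Complex.star_def,
    conj_ofReal, Complex.add_re, Complex.sub_re, neg_mul, Complex.neg_re, Complex.re_ofReal_mul]
    at hw
  have hδδ : δ * δ⁻¹ = 1 := mul_inv_cancel₀ hδ.ne'
  rw [← mul_assoc δ, hδδ, one_mul] at hw
  calc _ = δ * (δ⁻¹ * (star (G *ᵥ u) ⬝ᵥ G *ᵥ u).re) := by rw [← mul_assoc, hδδ, one_mul]
    _ < δ * (δ * (star u ⬝ᵥ u).re) := mul_lt_mul_of_pos_left (by linarith) hδ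
    _ = _ := by ring

end Dissipativity

theorem isStrictlyDissipativeAt_of_posDef_neg_block3 {n m p : ℕ}
    {A : Matrix (Fin n) (Fin n) ℂ} {B : Matrix (Fin n) (Fin m) ℂ}
    {C : Matrix (Fin p) (Fin n) ℂ} {D : Matrix (Fin p) (Fin m) ℂ}
    {U V : Matrix (Fin n) (Fin n) ℂ} {e f ωc : ℂ} {r r₁ r₂ δ : ℝ}
    (hU : U.IsHermitian) (hV : V.PosDef) (he : star e * e = 1) (hf : f = -I * e)
    (hωc : ωc = e * ((r₁ : ℂ) + r₂) / 2) (hr₁ : r₁ ≤ r) (hr₂ : r ≤ r₂)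
    (hLMI : (-(block3
      (Aᴴ * (f • U + ωc • V) + (Aᴴ * (f • U + ωc • V))ᴴ - Aᴴ * V * A - ((r₁ * r₂ : ℝ) : ℂ) • V)
      (-(Bᴴ * V * A) + Bᴴ * (f • U + ωc • V))ᴴ Cᴴ
      (-(Bᴴ * V * A) + Bᴴ * (f • U + ωc • V)) (-(δ : ℂ) • 1 - Bᴴ * V * B) Dᴴ
      C D (-(δ : ℂ) • 1))).PosDef) :
    IsStrictlyDissipativeAt A B C D ((r : ℂ) * e) δ := by
  intro x u w hx hxu
  have hz : Sum.elim (Sum.elim x u) w ≠ 0 := by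
    rcases hxu with h | h <;> contrapose! h <;> ext i
    · exact congrFun h (.inl (.inl i))
    · exact congrFun h (.inl (.inr i))
  have hq := hLMI.dotProduct_mulVec_pos hz
  rw [neg_mulVec, dotProduct_neg, neg_pos, star_sumElim_dotProduct_kyp_block3_mulVec _ _ _ _ _ _
    hV.isHermitian.eq _ _ w hx, middleFrequency_weight_eq hU hV.isHermitian he hf hωc] at hq
  have hweight : 0 ≤ (((r - r₁) * (r₂ - r) : ℝ) : ℂ) * (star x ⬝ᵥ V *ᵥ x) :=
    mul_nonneg (by exact_mod_cast mul_nonneg (sub_nonneg.2 hr₁) (sub_nonneg.2 hr₂))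
      (hV.posSemidef.dotProduct_mulVec_nonneg x)
  exact (Complex.lt_def.1 ((le_add_of_nonneg_left hweight).trans_lt hq)).1

theorem fos_Linf_middle_frequency_general {n m p : ℕ} (ν φ δ ω₁ ω₂ : ℝ)
    (hν : 0 < ν) (hφ : φ = (Real.pi / 2) * (ν - 1))
    (hδ : 0 < δ) (hω₁ : 0 ≤ ω₁)
    (A : Matrix (Fin n) (Fin n) ℝ) (B : Matrix (Fin n) (Fin m) ℝ)
    (C : Matrix (Fin p) (Fin n) ℝ) (D : Matrix (Fin p) (Fin m) ℝ)
    (ωc : ℂ)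
    (hωc : ωc = Complex.exp ((Real.pi * ν / 2 : ℝ) * Complex.I) *
      (((ω₁ ^ ν : ℝ) : ℂ) + ((ω₂ ^ ν : ℝ) : ℂ)) / 2)
    (U V : Matrix (Fin n) (Fin n) ℂ)
    (hU : U.IsHermitian) (hVpd : V.PosDef)
    (X : Matrix (Fin n) (Fin n) ℂ) (Y : Matrix (Fin m) (Fin n) ℂ)
    (hX : X = (cmap A)ᵀ * (Complex.exp ((φ : ℂ) * Complex.I) • U + ωc • V))
    (hY : Y = -((cmap B)ᵀ * V * cmap A) +
      (cmap B)ᵀ * (Complex.exp ((φ : ℂ) * Complex.I) • U + ωc • V))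
    (hLMI : (-(block3
      (X + Xᴴ - (cmap A)ᵀ * V * cmap A - (((ω₁ ^ ν * ω₂ ^ ν : ℝ)) : ℂ) • V) Yᴴ (cmap C)ᵀ
      Y (-(δ : ℂ) • 1 - (cmap B)ᵀ * V * cmap B) (cmap D)ᵀ
      (cmap C) (cmap D) (-(δ : ℂ) • 1))).PosDef) :
    ∀ ω : ℝ, ω₁ ≤ ω → ω ≤ ω₂ →
      IsUnit ((((ω ^ ν : ℝ) : ℂ) * Complex.exp ((Real.pi * ν / 2 : ℝ) * Complex.I)) •
          (1 : Matrix (Fin n) (Fin n) ℂ) - cmap A) ∧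
      sigmaMax (cmap C *
        ((((ω ^ ν : ℝ) : ℂ) * Complex.exp ((Real.pi * ν / 2 : ℝ) * Complex.I)) •
          (1 : Matrix (Fin n) (Fin n) ℂ) - cmap A)⁻¹ * cmap B + cmap D) < δ := by
  intro ω hω₁ω hωω₂
  set e := Complex.exp ((Real.pi * ν / 2 : ℝ) * Complex.I)
  have he : star e * e = 1 := by
    rw [Complex.star_def, Complex.conj_mul', Complex.norm_exp_ofReal_mul_I, Complex.ofReal_one,
      one_pow]
  have hf : Complex.exp ((φ : ℂ) * Complex.I) = -Complex.I * e := by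
    rw [hφ, show ((Real.pi / 2 * (ν - 1) : ℝ) : ℂ) * I =
      ((Real.pi * ν / 2 : ℝ) : ℂ) * I + -Real.pi / 2 * I by push_cast; ring,
      Complex.exp_add, exp_neg_pi_div_two_mul_I, mul_comm]
  subst hX hY
  simp only [cmap_transpose] at hLMI
  have hdiss := isStrictlyDissipativeAt_of_posDef_neg_block3 hU hVpd he hf hωc
    (Real.rpow_le_rpow hω₁ hω₁ω hν.le) (Real.rpow_le_rpow (hω₁.trans hω₁ω) hωω₂ hν.le) hLMI
  exact ⟨hdiss.isUnit_smul_one_sub,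
    sigmaMax_lt_of_forall_ne_zero _ hδ fun u hu => hdiss.re_star_dotProduct_lt hδ hu⟩

/-- Middle-frequency L∞ bound via LMI (sufficiency direction of Theorem 4). -/
theorem fos_Linf_middle_frequency {n m p : ℕ} (ν φ δ ω₁ ω₂ : ℝ)
    (hν : 0 < ν) (hν2 : ν < 2) (hφ : φ = (Real.pi / 2) * (ν - 1))
    (hδ : 0 < δ) (hω₁ : 0 ≤ ω₁) (hω₁₂ : ω₁ ≤ ω₂)
    (A : Matrix (Fin n) (Fin n) ℝ) (B : Matrix (Fin n) (Fin m) ℝ)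
    (C : Matrix (Fin p) (Fin n) ℝ) (D : Matrix (Fin p) (Fin m) ℝ)
    (ωc : ℂ)
    (hωc : ωc = Complex.exp ((Real.pi * ν / 2 : ℝ) * Complex.I) *
      (((ω₁ ^ ν : ℝ) : ℂ) + ((ω₂ ^ ν : ℝ) : ℂ)) / 2)
    (U V : Matrix (Fin n) (Fin n) ℂ)
    (hU : U.IsHermitian) (hV : V.IsHermitian) (hVpd : V.PosDef)
    (X : Matrix (Fin n) (Fin n) ℂ) (Y : Matrix (Fin m) (Fin n) ℂ)
    (hX : X = (cmap A)ᵀ * (Complex.exp ((φ : ℂ) * Complex.I) • U + ωc • V))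
    (hY : Y = -((cmap B)ᵀ * V * cmap A) +
      (cmap B)ᵀ * (Complex.exp ((φ : ℂ) * Complex.I) • U + ωc • V))
    (hLMI : (-(block3
      (X + Xᴴ - (cmap A)ᵀ * V * cmap A - (((ω₁ ^ ν * ω₂ ^ ν : ℝ)) : ℂ) • V) Yᴴ (cmap C)ᵀ
      Y (-(δ : ℂ) • 1 - (cmap B)ᵀ * V * cmap B) (cmap D)ᵀ
      (cmap C) (cmap D) (-(δ : ℂ) • 1))).PosDef) :
    ∀ ω : ℝ, ω₁ ≤ ω → ω ≤ ω₂ →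
      IsUnit ((((ω ^ ν : ℝ) : ℂ) * Complex.exp ((Real.pi * ν / 2 : ℝ) * Complex.I)) •
          (1 : Matrix (Fin n) (Fin n) ℂ) - cmap A) ∧
      sigmaMax (cmap C *
        ((((ω ^ ν : ℝ) : ℂ) * Complex.exp ((Real.pi * ν / 2 : ℝ) * Complex.I)) •
          (1 : Matrix (Fin n) (Fin n) ℂ) - cmap A)⁻¹ * cmap B + cmap D) < δ :=
  fos_Linf_middle_frequency_general ν φ δ ω₁ ω₂ hν hφ hδ hω₁ A B C D ωc hωc U V hU hVpd X Y hX hY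
    hLMI
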